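/- Suppose c satisfies (Reg) and (Twist), X is compact with Lipschitz boundary, μ = ρ dx with ρ ∈ C⁰(X) and spt μ ⊂ X, and μ satisfies a (1,1)-Poincaré–Wirtinger inequality. Let ψ₁, ψ₂ ∈ Ψ_c, where Ψ_c := {ψ ∈ ℝᴺ : ψ = (ψ^{c*})^{c†}}. Then ψ₁ − ψ₂ ∈ span(𝟙) if and only if G(ψ₁) = G(ψ₂). -/

import Mathlib

/-!
Put `h = ψ₁^{c*} - ψ₂^{c*}` and `vᵢ = ψ₂ⁱ - ψ₁ⁱ`. Then `h ≤ vᵢ` on `Lagᵢ(ψ₁)` and `h ≥ vₖ` on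
`Lagₖ(ψ₂)`, so for every level `s` the set `{h > s}` lies in the union of the cells of `ψ₁` with
`vₖ > s` and contains the corresponding cells of `ψ₂`. By (Twist), distinct cells meet in level
sets of the submersions `c(·, yᵢ) - c(·, yₖ)`, which are Lebesgue-null, so `G(ψ₁) = G(ψ₂)` makes
these unions have equal mass and `h` takes its values in the finite set `{vᵢ}` `μ`-a.e., hence on
all of `spt μ` by continuity. A smooth function equal to `0` and `1` near two disjoint closed
pieces of `spt μ` has vanishing gradient `μ`-a.e., so the Poincaré–Wirtinger inequality forbids
splitting `spt μ` into two such pieces of positive mass: `h` is a constant `t` on `spt μ`. Since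
`ψ = (ψ^{c*})^{c†}` only sees `ψ^{c*}` on `spt μ`, this gives `ψ₂ = ψ₁ + t`.
-/

open MeasureTheory Metric Set Filter Bornology
open scoped RealInnerProductSpace ENNReal NNReal Topology symmDiff

noncomputable section

/-- Euclidean `n`-space. -/
abbrev Euc (n : ℕ) : Type := EuclideanSpace ℝ (Fin n)

/-- The `c^*`-transform `ψ^{c^*}(x) = max_i (-c(x,y_i) - ψ^i)` of a dual vector `ψ`. -/
def cStar {n N : ℕ} (c : Euc n → Fin N → ℝ) (ψ : Fin N → ℝ) (x : Euc n) : ℝ :=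
  ⨆ i, (-(c x i) - ψ i)

/-- The `i`-th Laguerre cell associated to the dual vector `ψ`. -/
def Lag {n N : ℕ} (X : Set (Euc n)) (c : Euc n → Fin N → ℝ) (ψ : Fin N → ℝ) (i : Fin N) :
    Set (Euc n) :=
  {x ∈ X | -(c x i) - ψ i = cStar c ψ x}

/-- The map `G(ψ)^i = μ(Lag_i(ψ))`. -/
def Gmap {n N : ℕ} (μ : Measure (Euc n)) (X : Set (Euc n)) (c : Euc n → Fin N → ℝ)
    (ψ : Fin N → ℝ) (i : Fin N) : ℝ :=
  (μ (Lag X c ψ i)).toReal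

/-- Condition (Reg): each `c(·, y_i)` is `C²`. -/
def Reg {n N : ℕ} (c : Euc n → Fin N → ℝ) : Prop :=
  ∀ i, ContDiff ℝ 2 fun x => c x i

/-- Condition (Twist): the gradients `∇_x c(x, y_i)` are pairwise distinct on `X`. -/
def Twist {n N : ℕ} (X : Set (Euc n)) (c : Euc n → Fin N → ℝ) : Prop :=
  ∀ x ∈ X, ∀ i j : Fin N, i ≠ j →
    gradient (fun z => c z i) x ≠ gradient (fun z => c z j) x

/-- `X` has Lipschitz boundary: near every boundary point, `X` coincides with the epigraph
of a Lipschitz function over some hyperplane. -/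
def HasLipschitzBoundary {n : ℕ} (X : Set (Euc n)) : Prop :=
  ∀ x ∈ frontier X, ∃ (v : Euc n) (g : Euc n → ℝ) (K : NNReal) (r : ℝ),
    0 < r ∧ ‖v‖ = 1 ∧ LipschitzWith K g ∧
    ∀ z ∈ ball x r, (z ∈ X ↔ g (z - ⟪z, v⟫ • v) ≤ ⟪z, v⟫)

/-- The `(q,1)`-Poincaré–Wirtinger inequality with constant `CPW`. -/
def PWIneq {n : ℕ} (μ : Measure (Euc n)) (q CPW : ℝ) : Prop :=
  ∀ f : Euc n → ℝ, ContDiff ℝ 1 f →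
    (∫ x, |f x - ∫ z, f z ∂μ| ^ q ∂μ) ^ (1 / q) ≤ CPW * ∫ x, ‖gradient f x‖ ∂μ

/-- Loeper's condition (QC): for each `i`, a convex set `X_i` together with a `C²`
diffeomorphism `exp_i^c : X_i → X` such that all sublevel sets
`{p ∈ X_i : -c(exp_i^c p, y_k) + c(exp_i^c p, y_i) ≤ t}` are convex. -/
structure LoeperSystem {n N : ℕ} (X : Set (Euc n)) (c : Euc n → Fin N → ℝ) where
  dom : Fin N → Set (Euc n)
  exp : Fin N → Euc n → Euc n
  expInv : Fin N → Euc n → Euc n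
  convex_dom : ∀ i, Convex ℝ (dom i)
  contDiffOn_exp : ∀ i, ContDiffOn ℝ 2 (exp i) (dom i)
  contDiffOn_expInv : ∀ i, ContDiffOn ℝ 2 (expInv i) X
  mapsTo_exp : ∀ i, MapsTo (exp i) (dom i) X
  mapsTo_expInv : ∀ i, MapsTo (expInv i) X (dom i)
  left_inv : ∀ i, ∀ p ∈ dom i, expInv i (exp i p) = p
  right_inv : ∀ i, ∀ z ∈ X, exp i (expInv i z) = z
  sublevel_convex : ∀ i k : Fin N, ∀ t : ℝ,
    Convex ℝ {p ∈ dom i | -(c (exp i p) k) + c (exp i p) i ≤ t}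

/-- `(T, λ)` minimizes the semi-discrete optimal transport problem with storage fee
given by the convex indicator function of the set `S`. -/
def IsOptimalPair {n N : ℕ} (μ : Measure (Euc n)) (c : Euc n → Fin N → ℝ)
    (T : Euc n → Fin N) (lam : Fin N → ℝ) (S : Set (Fin N → ℝ)) : Prop :=
  Measurable T ∧ (∀ i, μ (T ⁻¹' {i}) = ENNReal.ofReal (lam i)) ∧ lam ∈ S ∧
    ∀ (T' : Euc n → Fin N) (lam' : Fin N → ℝ), Measurable T' →
      (∀ i, μ (T' ⁻¹' {i}) = ENNReal.ofReal (lam' i)) → lam' ∈ S →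
      ∫ x, c x (T x) ∂μ ≤ ∫ x, c x (T' x) ∂μ

/-- The support of a measure. -/
def msupport {n : ℕ} (μ : Measure (Euc n)) : Set (Euc n) :=
  {x | ∀ U ∈ nhds x, 0 < μ U}

/-- The pseudo `c`-transform `φ^{c†}` of a function `φ`. -/
def cDagger {n N : ℕ} (μ : Measure (Euc n)) (c : Euc n → Fin N → ℝ) (φ : Euc n → ℝ) :
    Fin N → ℝ :=
  fun i => sSup ((fun x => -(c x i) - φ x) '' msupport μ)


section LevelSet

variable {E : Type*} [NormedAddCommGroup E] [NormedSpace ℝ E] [FiniteDimensional ℝ E]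
  [MeasurableSpace E] [BorelSpace E] (μ : Measure E) [μ.IsAddHaarMeasure]

theorem ContinuousLinearMap.addHaar_preimage_singleton {ℓ : E →L[ℝ] ℝ} (hℓ : ℓ ≠ 0) (t : ℝ) :
    μ (ℓ ⁻¹' {t}) = 0 := by
  obtain ⟨e, he⟩ : ∃ e, ℓ e = 1 :=
    LinearMap.surjective_of_ne_zero (f := ℓ.toLinearMap) (ContinuousLinearMap.coe_injective.ne hℓ) 1
  let H : AffineSubspace ℝ E := AffineSubspace.mk' (t • e) (LinearMap.ker ℓ.toLinearMap)
  have hH : (H : Set E) = ℓ ⁻¹' {t} := by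
    ext x
    simp [H, AffineSubspace.mem_mk', he, sub_eq_zero]
  rw [← hH]
  refine Measure.addHaar_affineSubspace μ H fun htop => ?_
  have : (t + 1) • e ∈ H := htop ▸ AffineSubspace.mem_top ℝ E _
  rw [← SetLike.mem_coe, hH] at this
  simp [he] at this

theorem HasStrictFDerivAt.exists_mem_nhds_forall_addHaar_eq_zero_of_image {Φ : E → E}
    {A : E →L[ℝ] E} {x₀ : E} (hΦ : HasStrictFDerivAt Φ A x₀) (hA : A.det ≠ 0) :
    ∃ U ∈ 𝓝 x₀, ∀ s ⊆ U, μ (Φ '' s) = 0 → μ s = 0 := by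
  obtain ⟨m, hm0, hm⟩ := ENNReal.lt_iff_exists_nnreal_btwn.1
    (ENNReal.ofReal_pos.2 (abs_pos.2 hA))
  obtain ⟨δ, hδ, hδpos⟩ :=
    ((mul_le_addHaar_image_of_lt_det μ A hm).and self_mem_nhdsWithin).exists
  obtain ⟨U, hU, hΦU⟩ := hΦ.approximates_deriv_on_nhds (Or.inr hδpos)
  refine ⟨U, hU, fun s hs hs0 => ?_⟩
  have := hδ s Φ (hΦU.mono_set hs)
  rw [hs0, nonpos_iff_eq_zero, mul_eq_zero] at this
  exact this.resolve_left (ne_of_gt (by exact_mod_cast hm0))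

/-- Near a regular point of `f`, the map `x ↦ x + (f x - ℓ x) • e` with `ℓ e = 1` straightens the
level sets of `f` into hyperplanes `ℓ = t`, with derivative the identity at that point. -/
theorem HasStrictFDerivAt.exists_mem_nhds_addHaar_levelSet_inter {f : E → ℝ}
    {ℓ : E →L[ℝ] ℝ} {x₀ : E} (hf : HasStrictFDerivAt f ℓ x₀) (hℓ : ℓ ≠ 0) (t : ℝ) :
    ∃ U ∈ 𝓝 x₀, μ (f ⁻¹' {t} ∩ U) = 0 := by
  obtain ⟨e, he⟩ : ∃ e, ℓ e = 1 :=
    LinearMap.surjective_of_ne_zero (f := ℓ.toLinearMap) (ContinuousLinearMap.coe_injective.ne hℓ) 1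
  let Φ : E → E := fun x => x + (f x - ℓ x) • e
  have hΦ : HasStrictFDerivAt Φ (ContinuousLinearMap.id ℝ E) x₀ := by
    refine ((hasStrictFDerivAt_id x₀).add
      ((hf.sub ℓ.hasStrictFDerivAt).smul_const e)).congr_fderiv ?_
    ext
    simp
  obtain ⟨U, hU, hnull⟩ :=
    hΦ.exists_mem_nhds_forall_addHaar_eq_zero_of_image μ (by simp [ContinuousLinearMap.det])
  refine ⟨U, hU, hnull _ inter_subset_right (measure_mono_null ?_
    (ℓ.addHaar_preimage_singleton μ hℓ t))⟩
  rintro _ ⟨x, ⟨hx, -⟩, rfl⟩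
  simpa [Φ, he] using hx

theorem addHaar_eq_zero_of_subset_levelSet {f : E → ℝ} {f' : E → E →L[ℝ] ℝ} {s : Set E} {t : ℝ}
    (hs : s ⊆ f ⁻¹' {t}) (hf : ∀ x ∈ s, HasStrictFDerivAt f (f' x) x)
    (hf' : ∀ x ∈ s, f' x ≠ 0) : μ s = 0 := by
  refine measure_null_of_locally_null s fun x hx => ?_
  obtain ⟨U, hU, hU0⟩ := (hf x hx).exists_mem_nhds_addHaar_levelSet_inter μ (hf' x hx) t
  exact ⟨s ∩ U, inter_mem_nhdsWithin s hU,
    measure_mono_null (inter_subset_inter_left U hs) hU0⟩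

end LevelSet

section Laguerre

variable {n N : ℕ} {X : Set (Euc n)} {c : Euc n → Fin N → ℝ}

theorem Reg.continuous (hreg : Reg c) (i : Fin N) : Continuous fun x => c x i :=
  (hreg i).continuous

theorem le_cStar (c : Euc n → Fin N → ℝ) (ψ : Fin N → ℝ) (x : Euc n) (i : Fin N) :
    -(c x i) - ψ i ≤ cStar c ψ x :=
  le_ciSup (finite_range fun i => -(c x i) - ψ i).bddAbove i

theorem cStar_sub_cStar_le_of_mem_Lag {ψ₁ ψ₂ : Fin N → ℝ} {x : Euc n} {i : Fin N}
    (hx : x ∈ Lag X c ψ₁ i) : cStar c ψ₁ x - cStar c ψ₂ x ≤ ψ₂ i - ψ₁ i := by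
  linarith [hx.2, le_cStar c ψ₂ x i]

theorem le_cStar_sub_cStar_of_mem_Lag {ψ₁ ψ₂ : Fin N → ℝ} {x : Euc n} {k : Fin N}
    (hx : x ∈ Lag X c ψ₂ k) : ψ₂ k - ψ₁ k ≤ cStar c ψ₁ x - cStar c ψ₂ x := by
  linarith [hx.2, le_cStar c ψ₁ x k]

variable [Nonempty (Fin N)]

theorem exists_mem_Lag (ψ : Fin N → ℝ) {x : Euc n} (hx : x ∈ X) : ∃ i, x ∈ Lag X c ψ i := by
  obtain ⟨i, hi⟩ := Finite.exists_max fun i => -(c x i) - ψ i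
  exact ⟨i, hx, le_antisymm (le_cStar c ψ x i) (ciSup_le hi)⟩

theorem cStar_add_const (c : Euc n → Fin N → ℝ) (ψ : Fin N → ℝ) (r : ℝ) (x : Euc n) :
    cStar c (fun i => ψ i + r) x = cStar c ψ x - r := by
  rw [cStar, cStar, ciSup_sub (finite_range _).bddAbove]
  simp only [sub_add_eq_sub_sub]

theorem Lag_add_const (ψ : Fin N → ℝ) (r : ℝ) : Lag X c (fun i => ψ i + r) = Lag X c ψ := by
  ext x
  simp only [Lag, mem_ofPred_eq, cStar_add_const]
  constructor <;> rintro ⟨hx, h⟩ <;> exact ⟨hx, by linarith⟩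

theorem continuous_cStar (hc : ∀ i, Continuous fun x => c x i) (ψ : Fin N → ℝ) :
    Continuous (cStar c ψ) := by
  have : cStar c ψ = fun x => Finset.univ.sup' Finset.univ_nonempty fun i => -(c x i) - ψ i :=
    funext fun x => (Finset.sup'_univ_eq_ciSup _).symm
  rw [this]
  exact Continuous.finset_sup'_apply _ fun i _ => (hc i).neg.sub continuous_const

theorem measurableSet_Lag (hX : MeasurableSet X) (hc : ∀ i, Continuous fun x => c x i)
    (ψ : Fin N → ℝ) (i : Fin N) : MeasurableSet (Lag X c ψ i) :=
  hX.inter (measurableSet_eq_fun ((hc i).neg.sub continuous_const).measurable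
    (continuous_cStar hc ψ).measurable)

end Laguerre

theorem Twist.fderiv_sub_ne_zero {n N : ℕ} {X : Set (Euc n)} {c : Euc n → Fin N → ℝ}
    (htwist : Twist X c) {x : Euc n} (hx : x ∈ X) {i k : Fin N} (hik : i ≠ k) :
    fderiv ℝ (fun z => c z i) x - fderiv ℝ (fun z => c z k) x ≠ 0 := fun h =>
  htwist x hx i k hik (by rw [gradient, gradient, sub_eq_zero.1 h])

section Overlap

variable {n N : ℕ} {X : Set (Euc n)} {c : Euc n → Fin N → ℝ} {μ : Measure (Euc n)}

theorem measure_Lag_inter_Lag (hreg : Reg c) (htwist : Twist X c) (hac : μ ≪ volume)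
    (ψ : Fin N → ℝ) {i k : Fin N} (hik : i ≠ k) : μ (Lag X c ψ i ∩ Lag X c ψ k) = 0 := by
  have hstrict : ∀ j x, HasStrictFDerivAt (fun z => c z j) (fderiv ℝ (fun z => c z j) x) x :=
    fun j x => (hreg j).contDiffAt.hasStrictFDerivAt two_ne_zero
  refine hac (addHaar_eq_zero_of_subset_levelSet volume (f := fun x => c x i - c x k)
    (t := ψ k - ψ i) ?_ (fun x _ => (hstrict i x).sub (hstrict k x))
    (fun x hx => htwist.fderiv_sub_ne_zero hx.1.1 hik))
  rintro x ⟨⟨-, hxi⟩, -, hxk⟩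
  simp only [mem_preimage, mem_singleton_iff]
  linarith

theorem measure_biUnion_Lag [Nonempty (Fin N)] (hX : MeasurableSet X) (hreg : Reg c)
    (htwist : Twist X c) (hac : μ ≪ volume) (ψ : Fin N → ℝ) (F : Finset (Fin N)) :
    μ (⋃ k ∈ F, Lag X c ψ k) = ∑ k ∈ F, μ (Lag X c ψ k) :=
  measure_biUnion_finset₀ (fun _ _ _ _ hik => measure_Lag_inter_Lag hreg htwist hac ψ hik)
    fun k _ => (measurableSet_Lag hX hreg.continuous ψ k).nullMeasurableSet

end Overlap

section Comparison

variable {n N : ℕ} [Nonempty (Fin N)] {X : Set (Euc n)} {c : Euc n → Fin N → ℝ}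
  {μ : Measure (Euc n)} [IsFiniteMeasure μ] {ψ₁ ψ₂ : Fin N → ℝ}

theorem measure_superlevel_diff_biUnion_Lag (hX : MeasurableSet X) (hreg : Reg c)
    (htwist : Twist X c) (hac : μ ≪ volume)
    (hG : ∀ i, μ (Lag X c ψ₁ i) = μ (Lag X c ψ₂ i)) (s : ℝ) :
    μ ({x ∈ X | s < cStar c ψ₁ x - cStar c ψ₂ x} \
      ⋃ k ∈ Finset.univ.filter (fun k => s < ψ₂ k - ψ₁ k), Lag X c ψ₂ k) = 0 := by
  set F := Finset.univ.filter fun k => s < ψ₂ k - ψ₁ k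
  have hsub₁ : {x ∈ X | s < cStar c ψ₁ x - cStar c ψ₂ x} ⊆ ⋃ k ∈ F, Lag X c ψ₁ k := by
    rintro x ⟨hxX, hx⟩
    obtain ⟨i, hi⟩ := exists_mem_Lag ψ₁ hxX
    exact mem_biUnion (by simpa [F] using hx.trans_le (cStar_sub_cStar_le_of_mem_Lag hi)) hi
  have hsub₂ : ⋃ k ∈ F, Lag X c ψ₂ k ⊆ {x ∈ X | s < cStar c ψ₁ x - cStar c ψ₂ x} := by
    simp only [iUnion_subset_iff]
    intro k hk x hx
    exact ⟨hx.1, (Finset.mem_filter.1 hk).2.trans_le (le_cStar_sub_cStar_of_mem_Lag hx)⟩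
  have hle : μ {x ∈ X | s < cStar c ψ₁ x - cStar c ψ₂ x} ≤ μ (⋃ k ∈ F, Lag X c ψ₂ k) :=
    calc _ ≤ μ (⋃ k ∈ F, Lag X c ψ₁ k) := measure_mono hsub₁
      _ = μ (⋃ k ∈ F, Lag X c ψ₂ k) := by
        simp only [measure_biUnion_Lag hX hreg htwist hac, hG]
  rw [measure_sdiff hsub₂ (Finset.measurableSet_biUnion F fun k _ =>
    measurableSet_Lag hX hreg.continuous ψ₂ k).nullMeasurableSet
    (measure_ne_top μ _), tsub_eq_zero_of_le hle]

theorem ae_cStar_sub_cStar_mem_range (hX : MeasurableSet X) (hXc : μ Xᶜ = 0) (hreg : Reg c)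
    (htwist : Twist X c) (hac : μ ≪ volume)
    (hG : ∀ i, μ (Lag X c ψ₁ i) = μ (Lag X c ψ₂ i)) :
    ∀ᵐ x ∂μ, cStar c ψ₁ x - cStar c ψ₂ x ∈ range fun k => ψ₂ k - ψ₁ k := by
  classical
  have hgood := ae_all_iff.2 fun j => measure_eq_zero_iff_ae_notMem.1
    (measure_superlevel_diff_biUnion_Lag hX hreg htwist hac hG (ψ₂ j - ψ₁ j))
  filter_upwards [measure_eq_zero_iff_ae_notMem.1 hXc, hgood] with x hxX hx
  rw [notMem_compl_iff] at hxX
  obtain ⟨k₀, hk₀, hmax⟩ := (Finset.univ.filter fun k => x ∈ Lag X c ψ₂ k).exists_max_image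
    (fun k => ψ₂ k - ψ₁ k) (by
      obtain ⟨k, hk⟩ := exists_mem_Lag (c := c) ψ₂ hxX
      exact ⟨k, Finset.mem_filter.2 ⟨Finset.mem_univ k, hk⟩⟩)
  refine ⟨k₀, (le_cStar_sub_cStar_of_mem_Lag (Finset.mem_filter.1 hk₀).2).antisymm
    (not_lt.1 fun hlt => hx k₀ ⟨⟨hxX, hlt⟩, ?_⟩)⟩
  simp only [mem_iUnion, Finset.mem_filter, Finset.mem_univ, true_and, not_exists]
  intro k hk hxk
  exact hk.not_ge (hmax k (by simpa using hxk))

end Comparison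

section Support

variable {n : ℕ} {μ : Measure (Euc n)}

theorem msupport_eq_support (μ : Measure (Euc n)) : msupport μ = μ.support := by
  ext x
  exact (Measure.mem_support_iff_forall x).symm

theorem measure_pos_of_mem_support {x : Euc n} (hx : x ∈ μ.support) {U A : Set (Euc n)}
    (hU : U ∈ 𝓝 x) (hUA : U ∩ μ.support ⊆ A) : 0 < μ A :=
  calc 0 < μ U := (Measure.mem_support_iff_forall x).1 hx U hU
    _ = μ (U ∩ μ.support) := (measure_inter_conull Measure.measure_compl_support).symm
    _ ≤ μ A := measure_mono hUA

open scoped Manifold in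
theorem PWIneq.measure_eq_zero_or_measure_eq_zero [IsFiniteMeasure μ] {C : ℝ}
    (hPW : PWIneq μ 1 C) {K₁ K₂ : Set (Euc n)} (hK₁ : IsClosed K₁) (hK₂ : IsClosed K₂)
    (hK : Disjoint K₁ K₂) (hcover : μ (K₁ ∪ K₂)ᶜ = 0) : μ K₁ = 0 ∨ μ K₂ = 0 := by
  obtain ⟨f, hf₁, hf₂, hf⟩ := exists_contMDiffMap_zero_one_nhds_of_isClosed 𝓘(ℝ, Euc n)
    (n := 1) hK₁ hK₂ hK
  have hfC1 : ContDiff ℝ 1 f := contMDiff_iff_contDiff.1 f.contMDiff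
  have hgrad : ∀ᵐ x ∂μ, gradient f x = 0 := by
    filter_upwards [measure_eq_zero_iff_ae_notMem.1 hcover] with x hx
    rw [notMem_compl_iff] at hx
    rcases hx with hx | hx
    · have h₀ : (⇑f) =ᶠ[𝓝 x] fun _ => (0 : ℝ) := hf₁.filter_mono (nhds_le_nhdsSet hx)
      exact h₀.gradient_eq.trans (gradient_const x 0)
    · have h₁ : (⇑f) =ᶠ[𝓝 x] fun _ => (1 : ℝ) := hf₂.filter_mono (nhds_le_nhdsSet hx)
      exact h₁.gradient_eq.trans (gradient_const x 1)
  set m := ∫ x, f x ∂μ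
  have hint : Integrable (fun x => |f x - m|) μ :=
    (Integrable.of_bound hfC1.continuous.aestronglyMeasurable 1
      (Eventually.of_forall fun x => abs_le.2 ⟨by linarith [(hf x).1], (hf x).2⟩)).sub
      (integrable_const m) |>.abs
  have hzero : ∫ x, |f x - m| ∂μ = 0 := by
    have hgrad₀ : ∫ x, ‖gradient f x‖ ∂μ = 0 :=
      integral_eq_zero_of_ae (hgrad.mono fun x hx => by simp [hx])
    refine le_antisymm ?_ (integral_nonneg fun x => abs_nonneg _)
    simpa [hgrad₀] using hPW f hfC1
  have hae : ∀ᵐ x ∂μ, f x = m := by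
    filter_upwards [(integral_eq_zero_iff_of_nonneg (fun x => abs_nonneg _) hint).1 hzero]
      with x hx
    simpa [sub_eq_zero] using hx
  by_contra! h
  obtain ⟨x₁, hx₁, hm₁⟩ := Measure.exists_mem_of_measure_ne_zero_of_ae h.1 (ae_restrict_of_ae hae)
  obtain ⟨x₂, hx₂, hm₂⟩ := Measure.exists_mem_of_measure_ne_zero_of_ae h.2 (ae_restrict_of_ae hae)
  linarith [hf₁.self_of_nhdsSet x₁ hx₁, hf₂.self_of_nhdsSet x₂ hx₂]

theorem PWIneq.exists_forall_mem_support_eq [IsProbabilityMeasure μ] {C : ℝ}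
    (hPW : PWIneq μ 1 C) {g : Euc n → ℝ} (hg : Continuous g) {S : Set ℝ} (hS : S.Finite)
    (hgS : ∀ x ∈ μ.support, g x ∈ S) : ∃ t, ∀ x ∈ μ.support, g x = t := by
  obtain ⟨x₀, hx₀⟩ := Measure.nonempty_support (IsProbabilityMeasure.ne_zero μ)
  refine ⟨g x₀, fun x₁ hx₁ => by_contra fun hne => ?_⟩
  have hrest : IsClosed (S \ {g x₀}) := hS.sdiff.isClosed
  have hpos₁ : 0 < μ (μ.support ∩ g ⁻¹' {g x₀}) := by
    refine measure_pos_of_mem_support hx₀ ((hrest.isOpen_compl.preimage hg).mem_nhds (by simp))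
      fun y ⟨hy, hyS⟩ => ⟨hyS, ?_⟩
    by_contra hne
    exact hy ⟨hgS y hyS, hne⟩
  have hpos₂ : 0 < μ (μ.support ∩ g ⁻¹' (S \ {g x₀})) :=
    measure_pos_of_mem_support hx₁ ((isOpen_ne_fun hg continuous_const).mem_nhds hne)
      fun y ⟨hy, hyS⟩ => ⟨hyS, hgS y hyS, hy⟩
  have hcover : μ ((μ.support ∩ g ⁻¹' {g x₀}) ∪ μ.support ∩ g ⁻¹' (S \ {g x₀}))ᶜ = 0 := by
    refine measure_mono_null (compl_subset_compl.2 fun y hy => ?_) Measure.measure_compl_support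
    by_cases hy₀ : g y = g x₀
    exacts [Or.inl ⟨hy, hy₀⟩, Or.inr ⟨hy, hgS y hy, hy₀⟩]
  rcases hPW.measure_eq_zero_or_measure_eq_zero
    (Measure.isClosed_support.inter (isClosed_singleton.preimage hg))
    (Measure.isClosed_support.inter (hrest.preimage hg))
    ((disjoint_sdiff_right.preimage g).mono inter_subset_right inter_subset_right) hcover
    with h | h
  exacts [hpos₁.ne' h, hpos₂.ne' h]

end Support

theorem cDagger_cStar_eq_add {n N : ℕ} {μ : Measure (Euc n)} (hμ : μ ≠ 0)
    {c : Euc n → Fin N → ℝ} {ψ₁ ψ₂ : Fin N → ℝ} {t : ℝ}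
    (ht : ∀ x ∈ μ.support, cStar c ψ₁ x - cStar c ψ₂ x = t) (i : Fin N) :
    cDagger μ c (cStar c ψ₂) i = cDagger μ c (cStar c ψ₁) i + t := by
  have himage : (fun x => -(c x i) - cStar c ψ₂ x) '' μ.support =
      (· + t) '' ((fun x => -(c x i) - cStar c ψ₁ x) '' μ.support) := by
    rw [image_image]
    refine image_congr fun x hx => ?_
    linarith [ht x hx]
  rw [cDagger, cDagger, msupport_eq_support, himage]
  refine (Monotone.map_csSup_of_continuousAt (continuous_add_const t).continuousAt
    (fun _ _ hab => add_le_add_left hab t) ((Measure.nonempty_support hμ).image _) ?_).symm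
  exact ⟨ψ₁ i, forall_mem_image.2 fun x _ => by linarith [le_cStar c ψ₁ x i]⟩

theorem stmt11_general {n N : ℕ}
    (X : Set (Euc n)) (hXcpt : IsCompact X)
    (c : Euc n → Fin N → ℝ) (hreg : Reg c) (htwist : Twist X c)
    (ρ : Euc n → ℝ) (hρ0 : ∀ x ∉ X, ρ x = 0)
    (μ : Measure (Euc n)) [IsProbabilityMeasure μ]
    (hμ : μ = volume.withDensity fun x => ENNReal.ofReal (ρ x))
    (hPW : ∃ CPW : ℝ, 0 < CPW ∧ PWIneq μ 1 CPW)
    (ψ₁ ψ₂ : Fin N → ℝ)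
    (hψ₁ : ψ₁ = cDagger μ c (cStar c ψ₁)) (hψ₂ : ψ₂ = cDagger μ c (cStar c ψ₂)) :
    (∃ r : ℝ, ∀ i, ψ₁ i - ψ₂ i = r) ↔ ∀ i, Gmap μ X c ψ₁ i = Gmap μ X c ψ₂ i := by
  rcases isEmpty_or_nonempty (Fin N) with _ | _
  · simp
  constructor
  · rintro ⟨r, hr⟩ i
    have : ψ₁ = fun i => ψ₂ i + r := funext fun i => by linarith [hr i]
    rw [Gmap, Gmap, this, Lag_add_const]
  intro hG
  have hX : MeasurableSet X := hXcpt.isClosed.measurableSet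
  have hac : μ ≪ volume := hμ ▸ withDensity_absolutelyContinuous _ _
  have hXc : μ Xᶜ = 0 := by
    rw [hμ, withDensity_apply _ hX.compl]
    exact setLIntegral_eq_zero hX.compl fun x hx => by simp [hρ0 x hx]
  have hae := ae_cStar_sub_cStar_mem_range hX hXc hreg htwist hac
    fun i => (ENNReal.toReal_eq_toReal_iff' (measure_ne_top μ _) (measure_ne_top μ _)).1 (hG i)
  have hcont := (continuous_cStar hreg.continuous ψ₁).sub (continuous_cStar hreg.continuous ψ₂)
  obtain ⟨_, -, hPW⟩ := hPW
  obtain ⟨t, ht⟩ := hPW.exists_forall_mem_support_eq hcont (finite_range _)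
    (Measure.support_subset_of_isClosed ((finite_range _).isClosed.preimage hcont) hae)
  refine ⟨-t, fun i => ?_⟩
  linarith [congrFun hψ₁ i, congrFun hψ₂ i,
    cDagger_cStar_eq_add (IsProbabilityMeasure.ne_zero μ) ht i]

/-- **Lemma 3.3: injectivity of `G` modulo constants.** -/
theorem stmt11 {n N : ℕ} (hn : 2 ≤ n) (hN : 0 < N)
    (X : Set (Euc n)) (hXcpt : IsCompact X) (hXlip : HasLipschitzBoundary X)
    (c : Euc n → Fin N → ℝ) (hreg : Reg c) (htwist : Twist X c)
    (ρ : Euc n → ℝ) (hρcont : ContinuousOn ρ X) (hρ0 : ∀ x ∉ X, ρ x = 0)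
    (hρnn : ∀ x, 0 ≤ ρ x)
    (μ : Measure (Euc n)) [IsProbabilityMeasure μ]
    (hμ : μ = volume.withDensity fun x => ENNReal.ofReal (ρ x))
    (hPW : ∃ CPW : ℝ, 0 < CPW ∧ PWIneq μ 1 CPW)
    (ψ₁ ψ₂ : Fin N → ℝ)
    (hψ₁ : ψ₁ = cDagger μ c (cStar c ψ₁)) (hψ₂ : ψ₂ = cDagger μ c (cStar c ψ₂)) :
    (∃ r : ℝ, ∀ i, ψ₁ i - ψ₂ i = r) ↔ ∀ i, Gmap μ X c ψ₁ i = Gmap μ X c ψ₂ i :=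
  stmt11_general X hXcpt c hreg htwist ρ hρ0 μ hμ hPW ψ₁ ψ₂ hψ₁ hψ₂
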